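/- arXiv:2508.06770 — 2 statements merged into one kernel-verified Lean document; each statement's English description precedes it below -/
import Mathlib

section
/- Let λ be a Young diagram with n boxes and maximal hook length s = s(λ), and let 1 ≤ ℓ ≤ λ_1 be an integer with ℓ ≤ n/s. Then the excited sum satisfies S(λ, [ℓ]) ≤ (8n/ℓ)^ℓ. -/
open scoped BigOperators

namespace ThickHookPaper

/-- The diagonal length `δ(λ)` of a Young diagram: the number of diagonal boxes `(i,i)` in `λ`. -/
def diagLen (l : YoungDiagram) : ℕ := (l.cells.filter (fun u => u.1 = u.2)).card

/-- The maximal hook length `s(λ) = λ₁ + λ₁' - 1` of a Young diagram. -/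
def maxHook (l : YoungDiagram) : ℕ := l.rowLen 0 + l.colLen 0 - 1

/-- The hook length of the box `u = (i, j)` in `λ`. -/
def hook (l : YoungDiagram) (u : ℕ × ℕ) : ℕ :=
  (l.rowLen u.1 - u.2) + (l.colLen u.2 - u.1) - 1

/-- The number of standard tableaux of the skew shape `λ \ μ`, defined as the number of
saturated chains of Young diagrams from `μ` to `λ` (each step adding exactly one box). -/
noncomputable def skewSYT (μ l : YoungDiagram) : ℕ :=
  Nat.card {f : Fin (l.card - μ.card + 1) → YoungDiagram //
    f 0 = μ ∧ f (Fin.last _) = l ∧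
    ∀ i : Fin (l.card - μ.card),
      f i.castSucc ≤ f i.succ ∧ (f i.succ).card = (f i.castSucc).card + 1}

/-- The number of standard Young tableaux of shape `λ`, i.e. the dimension `d_λ`. -/
noncomputable def dim (l : YoungDiagram) : ℕ := skewSYT ⊥ l

/-! ### Ribbons and the Murnaghan--Nakayama character -/

/-- Two boxes are adjacent if they share an edge. -/
def Adj (u v : ℕ × ℕ) : Prop :=
  (u.1 = v.1 ∧ (u.2 + 1 = v.2 ∨ v.2 + 1 = u.2)) ∨
    (u.2 = v.2 ∧ (u.1 + 1 = v.1 ∨ v.1 + 1 = u.1))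

/-- A finite set of boxes is connected if any two of its boxes are linked by a path of
adjacent boxes inside the set. -/
def ConnectedCells (c : Finset (ℕ × ℕ)) : Prop :=
  ∀ u ∈ c, ∀ v ∈ c, Relation.ReflTransGen (fun x y => x ∈ c ∧ y ∈ c ∧ Adj x y) u v

/-- A set of boxes contains no `2 × 2` square. -/
def No2x2 (c : Finset (ℕ × ℕ)) : Prop :=
  ∀ i j : ℕ, ¬ ((i, j) ∈ c ∧ (i + 1, j) ∈ c ∧ (i, j + 1) ∈ c ∧ (i + 1, j + 1) ∈ c)

/-- `IsRibbon μ l` : the skew diagram `l \ μ` is a ribbon (nonempty, connected, no 2×2 square). -/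
def IsRibbon (μ l : YoungDiagram) : Prop :=
  μ ≤ l ∧ (l.cells \ μ.cells).Nonempty ∧ ConnectedCells (l.cells \ μ.cells) ∧
    No2x2 (l.cells \ μ.cells)

/-- The height of a set of boxes: the difference between the largest and smallest
row indices occurring in it. -/
noncomputable def cellsHeight (c : Finset (ℕ × ℕ)) : ℕ :=
  c.sup Prod.fst - sInf (Prod.fst '' (c : Set (ℕ × ℕ)))

/-- `IsRibbonTableau l α f` : `f` is a ribbon tableau of shape `l` and weight `α`, i.e. a
chain `⊥ = f 0 ⊆ f 1 ⊆ ... ⊆ f N = l` where each successive skew diagram is a ribbon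
with `α i` boxes. -/
def IsRibbonTableau (l : YoungDiagram) (α : List ℕ) (f : Fin (α.length + 1) → YoungDiagram) :
    Prop :=
  f 0 = ⊥ ∧ f (Fin.last _) = l ∧
  ∀ i : Fin α.length,
    IsRibbon (f i.castSucc) (f i.succ) ∧
      ((f i.succ).cells \ (f i.castSucc).cells).card = α.get i

/-- The total height of a ribbon tableau: the sum of the heights of its ribbons. -/
noncomputable def tabHeight (N : ℕ) (f : Fin (N + 1) → YoungDiagram) : ℕ :=
  ∑ i : Fin N, cellsHeight ((f i.succ).cells \ (f i.castSucc).cells)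

/-- The Murnaghan--Nakayama alternating sum over ribbon tableaux of shape `l` and weight `α`. -/
noncomputable def charMN (l : YoungDiagram) (α : List ℕ) : ℤ :=
  ∑ᶠ f ∈ {f : Fin (α.length + 1) → YoungDiagram | IsRibbonTableau l α f},
    (-1 : ℤ) ^ tabHeight α.length f

/-- The cycle type of a permutation including fixed points (as parts equal to `1`). -/
def fullCycleType {n : ℕ} (σ : Equiv.Perm (Fin n)) : Multiset ℕ :=
  σ.cycleType + Multiset.replicate (n - σ.support.card) 1

/-- The character `ch^λ(σ)` of the irreducible representation of `S_n` indexed by `λ ⊢ n`,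
defined via the Murnaghan--Nakayama rule. -/
noncomputable def charPerm (l : YoungDiagram) {n : ℕ} (σ : Equiv.Perm (Fin n)) : ℤ :=
  charMN l (fullCycleType σ).toList

/-- The total number of cycles of `σ`, fixed points counted as 1-cycles. -/
def cyc {n : ℕ} (σ : Equiv.Perm (Fin n)) : ℕ := Multiset.card (fullCycleType σ)

/-- `|σ|`: the minimal number of transpositions whose product is `σ`, which equals
`n` minus the number of cycles of `σ` (fixed points included). -/
def transLen {n : ℕ} (σ : Equiv.Perm (Fin n)) : ℕ := n - cyc σ

/-! ### Excited diagrams -/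

/-- The upper-right square of a box. -/
def URS (u : ℕ × ℕ) : Finset (ℕ × ℕ) :=
  {u, (u.1 + 1, u.2), (u.1, u.2 + 1), (u.1 + 1, u.2 + 1)}

/-- One simple excitation step: an excitable box of `E` is moved diagonally up-right. -/
def ExciteStep (l : YoungDiagram) (E E' : Finset (ℕ × ℕ)) : Prop :=
  ∃ u ∈ E, URS u ⊆ l.cells ∧ E ∩ URS u = {u} ∧
    E' = insert (u.1 + 1, u.2 + 1) (E.erase u)

/-- The set `𝓔(λ, μ)` of excited diagrams of `μ` in `λ`. -/
def Excited (l μ : YoungDiagram) : Set (Finset (ℕ × ℕ)) :=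
  {E | Relation.ReflTransGen (ExciteStep l) μ.cells E}

/-- The excited sum `S(λ, μ) = Σ_{E ∈ 𝓔(λ,μ)} Π_{u ∈ E} H(λ, u)`. -/
noncomputable def excitedSum (l μ : YoungDiagram) : ℕ :=
  ∑ᶠ E ∈ Excited l μ, ∏ u ∈ E, hook l u

/-! ### Rectangles, rows -/

/-- The rectangular Young diagram `[a^b]` with `b` rows of length `a`. -/
def rect (a b : ℕ) : YoungDiagram :=
  ⟨Finset.range b ×ˢ Finset.range a, by
    rintro ⟨i, j⟩ ⟨i', j'⟩ ⟨h1, h2⟩ hu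
    simp only [Finset.coe_product, Set.mem_prod, Finset.mem_coe, Finset.mem_range] at *
    exact ⟨lt_of_le_of_lt h1 hu.1, lt_of_le_of_lt h2 hu.2⟩⟩

/-- The one-row Young diagram `[ℓ]`. -/
def rowDiagram (ℓ : ℕ) : YoungDiagram := rect ℓ 1

/-! ### Thick hook decompositions -/

/-- The boxes of `λ` whose diagonal index `min i j` lies in `[lo, hi)`: this is the thick hook
`λ^{(lo+1) → hi}` in the (1-indexed) notation of the paper. -/
def thickHookCells (l : YoungDiagram) (lo hi : ℕ) : Finset (ℕ × ℕ) :=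
  l.cells.filter (fun u => lo ≤ min u.1 u.2 ∧ min u.1 u.2 < hi)

/-- An `(a, b)` thick hook decomposition of `λ`: diagonal indices
`0 = i_0 < i_1 < ... < i_p = δ(λ)` such that each thick hook
`T_j = λ^{(i_{j-1}+1) → i_j}` has between `a` and `b` boxes. -/
structure ThickHookDecomp (l : YoungDiagram) (a b : ℝ) where
  p : ℕ
  p_pos : 0 < p
  idx : ℕ → ℕ
  idx_zero : idx 0 = 0
  idx_last : idx p = diagLen l
  idx_strictMono : ∀ j < p, idx j < idx (j + 1)
  size_lb : ∀ j < p, a ≤ ((thickHookCells l (idx j) (idx (j + 1))).card : ℝ)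
  size_ub : ∀ j < p, ((thickHookCells l (idx j) (idx (j + 1))).card : ℝ) ≤ b

/-- The corners of a Young diagram: boxes `u ∈ λ` such that neither the box to the right
nor the box above (in the French convention: the next box in the row and in the column)
belongs to `λ`. -/
def corners (l : YoungDiagram) : Finset (ℕ × ℕ) :=
  l.cells.filter (fun u => (u.1, u.2 + 1) ∉ l ∧ (u.1 + 1, u.2) ∉ l)

/-!
An excited diagram of the row `[ℓ]` has exactly one box `(d c, c + d c)` on each diagonal
`c < ℓ`, with `d` weakly increasing, so it is determined by the number of its boxes in each row.
A box in row `i` has hook length at most `hᵢ := H(λ, (i, i)) ≤ s`, hence `S(λ, [ℓ])` is at most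
the complete homogeneous polynomial `h_ℓ(h₀, h₁, …)`, which is bounded for `t > 0` by
`t^(-ℓ) ∏ᵢ (1 - t hᵢ)⁻¹`. With `t = ℓ / (4n)` every `t hᵢ ≤ 1/4`, so each factor is at most
`exp (4 t hᵢ / 3)`; as the diagonal hooks sum to at most `2n`, the product is at most
`exp (2ℓ/3) ≤ 2^ℓ`.
-/

open Finset

lemma hook_le_hook_diag (l : YoungDiagram) {i j : ℕ} (hij : i ≤ j) :
    hook l (i, j) ≤ hook l (i, i) := by
  have := l.colLen_anti i j hij
  simp only [hook]
  omega

lemma hook_diag_le_maxHook (l : YoungDiagram) (i : ℕ) : hook l (i, i) ≤ maxHook l := by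
  have := l.rowLen_anti 0 i i.zero_le
  have := l.colLen_anti 0 i i.zero_le
  simp only [hook, maxHook]
  omega

lemma sum_rowLen_le_card (l : YoungDiagram) (s : Finset ℕ) :
    ∑ i ∈ s, l.rowLen i ≤ l.card := by
  simp only [YoungDiagram.rowLen_eq_card, YoungDiagram.row]
  rw [sum_card_fiberwise_eq_card_filter]
  exact card_filter_le _ _

lemma sum_colLen_le_card (l : YoungDiagram) (s : Finset ℕ) :
    ∑ j ∈ s, l.colLen j ≤ l.card := by
  simp only [YoungDiagram.colLen_eq_card, YoungDiagram.col]
  rw [sum_card_fiberwise_eq_card_filter]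
  exact card_filter_le _ _

lemma sum_hook_diag_le (l : YoungDiagram) (s : Finset ℕ) :
    ∑ i ∈ s, hook l (i, i) ≤ 2 * l.card :=
  calc ∑ i ∈ s, hook l (i, i) ≤ ∑ i ∈ s, (l.rowLen i + l.colLen i) :=
        sum_le_sum fun i _ => by simp only [hook]; omega
    _ ≤ 2 * l.card := by
        rw [sum_add_distrib]
        linarith [sum_rowLen_le_card l s, sum_colLen_le_card l s]

lemma ExciteStep.subset_cells {l : YoungDiagram} {E E' : Finset (ℕ × ℕ)}
    (h : ExciteStep l E E') (hE : E ⊆ l.cells) : E' ⊆ l.cells := by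
  obtain ⟨u, -, hu, -, rfl⟩ := h
  exact insert_subset (hu (by simp [URS])) ((erase_subset _ _).trans hE)

lemma subset_cells_of_mem_excited {l μ : YoungDiagram} (hμ : μ ≤ l) {E : Finset (ℕ × ℕ)}
    (hE : E ∈ Excited l μ) : E ⊆ l.cells := by
  induction hE with
  | refl => exact YoungDiagram.cells_subset_iff.mpr hμ
  | tail _ hstep ih => exact hstep.subset_cells ih

lemma rowDiagram_le {l : YoungDiagram} {ℓ : ℕ} (h : ℓ ≤ l.rowLen 0) : rowDiagram ℓ ≤ l := by
  refine YoungDiagram.cells_subset_iff.mp fun u hu => ?_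
  obtain ⟨j, hj, rfl⟩ : ∃ j < ℓ, (0, j) = u := by simpa [rowDiagram, rect] using hu
  exact YoungDiagram.mem_iff_lt_rowLen.mpr (by omega)

def diagBoxes {ℓ : ℕ} (d : Fin ℓ → ℕ) : Finset (ℕ × ℕ) :=
  univ.image fun c => (d c, c + d c)

lemma diagBox_injective {ℓ : ℕ} (d : Fin ℓ → ℕ) :
    Function.Injective fun c : Fin ℓ => (d c, (c : ℕ) + d c) := by
  intro a b hab
  simp only [Prod.mk.injEq] at hab
  ext
  omega

lemma prod_diagBoxes {M : Type*} [CommMonoid M] {ℓ : ℕ} (d : Fin ℓ → ℕ) (f : ℕ × ℕ → M) :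
    ∏ u ∈ diagBoxes d, f u = ∏ c, f (d c, c + d c) :=
  prod_image fun _ _ _ _ h => diagBox_injective d h

lemma diagBoxes_zero (ℓ : ℕ) : diagBoxes (0 : Fin ℓ → ℕ) = (rowDiagram ℓ).cells := by
  ext ⟨i, j⟩
  simp only [diagBoxes, rowDiagram, rect, Pi.zero_apply, add_zero, mem_image, mem_univ, true_and,
    Prod.mk.injEq, mem_product, mem_range]
  constructor
  · rintro ⟨c, rfl, rfl⟩
    exact ⟨Nat.zero_lt_one, c.isLt⟩
  · rintro ⟨hi, hj⟩
    exact ⟨⟨j, hj⟩, by omega, rfl⟩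

lemma exciteStep_diagBoxes {l : YoungDiagram} {ℓ : ℕ} {d : Fin ℓ → ℕ} (hd : Monotone d)
    {E : Finset (ℕ × ℕ)} (h : ExciteStep l (diagBoxes d) E) :
    ∃ d' : Fin ℓ → ℕ, Monotone d' ∧ E = diagBoxes d' := by
  obtain ⟨u, hu, -, hexc, rfl⟩ := h
  obtain ⟨c₀, -, rfl⟩ := mem_image.mp hu
  -- excitability of the box on diagonal `c₀` forces a jump in `d` right after `c₀`
  have hjump : ∀ c, c₀ < c → d c₀ < d c := by
    intro c hc
    by_contra! hle
    obtain ⟨c₁, hc₁⟩ : ∃ c₁ : Fin ℓ, (c₁ : ℕ) = c₀ + 1 := ⟨⟨c₀ + 1, by omega⟩, rfl⟩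
    have hdc₁ : d c₁ = d c₀ :=
      le_antisymm ((hd (show c₁ ≤ c by rw [Fin.le_iff_val_le_val, hc₁]; exact hc)).trans hle)
        (hd (by rw [Fin.le_iff_val_le_val, hc₁]; omega))
    have hmem : (d c₁, (c₁ : ℕ) + d c₁) ∈ diagBoxes d ∩ URS (d c₀, c₀ + d c₀) := by
      refine mem_inter.mpr ⟨mem_image_of_mem _ (mem_univ _), ?_⟩
      simp only [URS, hdc₁, hc₁, mem_insert, mem_singleton, Prod.mk.injEq, true_and]
      omega
    rw [hexc, mem_singleton, Prod.mk.injEq] at hmem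
    omega
  refine ⟨Function.update d c₀ (d c₀ + 1), ?_, ?_⟩
  · intro a b hab
    obtain hlt | rfl := hab.lt_or_eq
    · have := hd hab
      simp only [Function.update_apply]
      split_ifs with hb ha ha <;> subst_vars
      exacts [le_rfl, hjump b hlt, by omega, this]
    · exact le_rfl
  · conv_rhs => rw [diagBoxes, ← insert_erase (mem_univ c₀), image_insert]
    rw [diagBoxes, ← image_erase (diagBox_injective d)]
    congr 1
    · simp only [Function.update_self, Prod.mk.injEq, true_and]
      omega
    · exact image_congr fun c hc => by simp [Function.update_of_ne (ne_of_mem_erase hc)]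

lemma exists_monotone_of_mem_excited_rowDiagram {l : YoungDiagram} {ℓ : ℕ}
    {E : Finset (ℕ × ℕ)} (hE : E ∈ Excited l (rowDiagram ℓ)) :
    ∃ d : Fin ℓ → ℕ, Monotone d ∧ E = diagBoxes d := by
  induction hE with
  | refl => exact ⟨0, monotone_const, (diagBoxes_zero ℓ).symm⟩
  | tail _ hstep ih =>
    obtain ⟨d, hd, rfl⟩ := ih
    exact exciteStep_diagBoxes hd hstep

lemma Monotone.eq_of_card_fiber_eq {α : Type*} [LinearOrder α] [Fintype α] {n : ℕ}
    {f g : Fin n → α} (hf : Monotone f) (hg : Monotone g)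
    (h : ∀ a, #{i | f i = a} = #{i | g i = a}) : f = g := by
  have hle (a : α) : #{i | f i ≤ a} = #{i | g i ≤ a} := by
    have hf' := sum_card_fiberwise_eq_card_filter univ {b | b ≤ a} f
    have hg' := sum_card_fiberwise_eq_card_filter univ {b | b ≤ a} g
    simp only [mem_filter, mem_univ, true_and] at hf' hg'
    rw [← hf', ← hg']
    exact sum_congr rfl fun b _ => h b
  funext j
  refine le_antisymm ?_ ?_
  · rw [← Tuple.lt_card_le_iff_apply_le_of_monotone hf, hle,
      Tuple.lt_card_le_iff_apply_le_of_monotone hg]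
  · rw [← Tuple.lt_card_le_iff_apply_le_of_monotone hg, ← hle,
      Tuple.lt_card_le_iff_apply_le_of_monotone hf]

lemma sum_prod_monotone_le_prod_sum_pow {R α : Type*} [CommSemiring R] [PartialOrder R]
    [IsOrderedRing R] [LinearOrder α] [Fintype α] (x : α → R) (hx : ∀ a, 0 ≤ x a) (n : ℕ) :
    ∑ d ∈ ({d | Monotone d} : Finset (Fin n → α)), ∏ i, x (d i) ≤
      ∏ a, ∑ k ∈ range (n + 1), x a ^ k := by
  set fiberCard : (Fin n → α) → α → ℕ := fun d a => #{i | d i = a}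
  have hprod (d : Fin n → α) : ∏ i, x (d i) = ∏ a, x a ^ fiberCard d a := by
    simp [fiberCard, ← prod_fiberwise' univ d x, prod_const]
  have hinj : Set.InjOn fiberCard {d | Monotone d} := fun d hd d' hd' h =>
    Monotone.eq_of_card_fiber_eq hd hd' (congrFun h)
  have hsub : ({d | Monotone d} : Finset (Fin n → α)).image fiberCard ⊆
      Fintype.piFinset fun _ => range (n + 1) := by
    simp only [subset_iff, mem_image, Fintype.mem_piFinset, mem_range]
    rintro _ ⟨d, -, rfl⟩ a
    exact Nat.lt_succ_of_le ((card_filter_le _ _).trans (card_fin n).le)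
  rw [prod_univ_sum]
  calc ∑ d ∈ ({d | Monotone d} : Finset (Fin n → α)), ∏ i, x (d i)
      = ∑ g ∈ ({d | Monotone d} : Finset (Fin n → α)).image fiberCard, ∏ a, x a ^ g a := by
        rw [sum_image fun d hd d' hd' => hinj (by simpa using hd) (by simpa using hd')]
        exact sum_congr rfl fun d _ => hprod d
    _ ≤ ∑ g ∈ Fintype.piFinset fun _ => range (n + 1), ∏ a, x a ^ g a :=
        sum_le_sum_of_subset_of_nonneg hsub fun g _ _ => prod_nonneg fun a _ => pow_nonneg (hx a) _

lemma excitedSum_rowDiagram_le {l : YoungDiagram} {ℓ : ℕ} (h : ℓ ≤ l.rowLen 0) :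
    excitedSum l (rowDiagram ℓ) ≤
      ∑ d ∈ ({d | Monotone d} : Finset (Fin ℓ → Fin (l.colLen 0))), ∏ c, hook l (d c, d c) := by
  classical
  set D : Finset (Fin ℓ → Fin (l.colLen 0)) := {d | Monotone d}
  set S := D.image fun d => diagBoxes fun c => (d c : ℕ)
  have hsub : Excited l (rowDiagram ℓ) ⊆ S := by
    intro E hE
    have hcells := subset_cells_of_mem_excited (rowDiagram_le h) hE
    obtain ⟨d, hd, rfl⟩ := exists_monotone_of_mem_excited_rowDiagram hE
    have hlt (c : Fin ℓ) : d c < l.colLen 0 :=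
      (YoungDiagram.mem_iff_lt_colLen.mp (hcells (mem_image_of_mem _ (mem_univ c)))).trans_le
        (l.colLen_anti 0 _ (Nat.zero_le _))
    refine mem_image.mpr ⟨fun c => ⟨d c, hlt c⟩, ?_, rfl⟩
    exact mem_filter.mpr ⟨mem_univ _, fun a b hab => Fin.mk_le_mk.mpr (hd hab)⟩
  calc excitedSum l (rowDiagram ℓ)
      = ∑ E ∈ S with E ∈ Excited l (rowDiagram ℓ), ∏ u ∈ E, hook l u :=
        finsum_mem_eq_sum_of_subset _ (fun E hE => mem_filter.mpr ⟨hsub hE.1, hE.1⟩)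
          fun E hE => (mem_filter.mp hE).2
    _ ≤ ∑ E ∈ S, ∏ u ∈ E, hook l u := sum_le_sum_of_subset (filter_subset _ _)
    _ ≤ ∑ d ∈ D, ∏ u ∈ diagBoxes (fun c => (d c : ℕ)), hook l u :=
        sum_image_le_of_nonneg fun _ _ => Nat.zero_le _
    _ ≤ ∑ d ∈ D, ∏ c, hook l (d c, d c) := sum_le_sum fun d _ => by
        rw [prod_diagBoxes]
        exact prod_le_prod' fun c _ => hook_le_hook_diag l (Nat.le_add_left _ _)

lemma geom_sum_le_exp {x : ℝ} (h0 : 0 ≤ x) (h4 : x ≤ 1 / 4) (m : ℕ) :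
    ∑ k ∈ range m, x ^ k ≤ Real.exp (4 / 3 * x) :=
  calc ∑ k ∈ range m, x ^ k ≤ (1 - x)⁻¹ := by
        have := geom_sum_Ico_le_of_lt_one (m := 0) (n := m) h0 (by linarith)
        rwa [← range_eq_Ico, pow_zero, one_div] at this
    _ ≤ 4 / 3 * x + 1 := by
        rw [inv_le_iff_one_le_mul₀ (by linarith)]
        nlinarith
    _ ≤ Real.exp (4 / 3 * x) := Real.add_one_le_exp _

lemma excitedSum_rowDiagram_mul_pow_le {l : YoungDiagram} {ℓ : ℕ} (h : ℓ ≤ l.rowLen 0) {t : ℝ}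
    (ht : 0 ≤ t) (hst : maxHook l * t ≤ 1 / 4) :
    (excitedSum l (rowDiagram ℓ) : ℝ) * t ^ ℓ ≤ Real.exp (8 / 3 * l.card * t) := by
  set D : Finset (Fin ℓ → Fin (l.colLen 0)) := {d | Monotone d}
  set y : Fin (l.colLen 0) → ℝ := fun a => hook l (a, a) * t
  have hy0 (a : Fin (l.colLen 0)) : 0 ≤ y a := by positivity
  have hy4 (a : Fin (l.colLen 0)) : y a ≤ 1 / 4 :=
    (mul_le_mul_of_nonneg_right (by exact_mod_cast hook_diag_le_maxHook l a) ht).trans hst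
  have hsum : ∑ a, y a ≤ 2 * l.card * t := by
    rw [← sum_mul, Fin.sum_univ_eq_sum_range (fun i => (hook l (i, i) : ℝ))]
    gcongr
    exact_mod_cast sum_hook_diag_le l _
  calc (excitedSum l (rowDiagram ℓ) : ℝ) * t ^ ℓ
      ≤ (∑ d ∈ D, ∏ c, (hook l (d c, d c) : ℝ)) * t ^ ℓ := by
        gcongr
        exact_mod_cast excitedSum_rowDiagram_le h
    _ = ∑ d ∈ D, ∏ c, y (d c) := by simp [y, sum_mul, prod_mul_distrib]
    _ ≤ ∏ a, ∑ k ∈ range (ℓ + 1), y a ^ k := sum_prod_monotone_le_prod_sum_pow y hy0 ℓ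
    _ ≤ ∏ a, Real.exp (4 / 3 * y a) :=
        prod_le_prod (fun a _ => sum_nonneg fun k _ => pow_nonneg (hy0 a) k)
          fun a _ => geom_sum_le_exp (hy0 a) (hy4 a) _
    _ = Real.exp (4 / 3 * ∑ a, y a) := by rw [mul_sum, Real.exp_sum]
    _ ≤ Real.exp (8 / 3 * l.card * t) := Real.exp_le_exp.mpr (by linarith)

lemma exp_two_thirds_le_two : Real.exp (2 / 3) ≤ 2 := by
  rw [← Real.le_log_iff_exp_le zero_lt_two]
  linarith [Real.log_two_gt_d9]

theorem excited_sum_row_small_general (l : YoungDiagram) (ℓ : ℕ) (h2 : ℓ ≤ l.rowLen 0)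
    (h3 : (ℓ : ℝ) ≤ (l.card : ℝ) / (maxHook l : ℝ)) :
    (excitedSum l (rowDiagram ℓ) : ℝ) ≤ (8 * (l.card : ℝ) / (ℓ : ℝ)) ^ ℓ := by
  obtain rfl | hℓ := ℓ.eq_zero_or_pos
  · simpa using excitedSum_rowDiagram_mul_pow_le h2 le_rfl (by simp)
  have hn : 0 < (l.card : ℝ) := by
    have := sum_rowLen_le_card l {0}
    rw [sum_singleton] at this
    exact_mod_cast (hℓ.trans_le h2).trans_le this
  have hs : 0 < (maxHook l : ℝ) :=
    Nat.cast_pos.mpr (Nat.pos_of_ne_zero fun h0 => by simp [h0] at h3; omega)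
  rw [le_div_iff₀ hs] at h3
  set t : ℝ := ℓ / (4 * l.card)
  have ht : 0 < t := by positivity
  have hnt : (l.card : ℝ) * t = ℓ / 4 := by
    simp only [t]
    field_simp
  have hst : maxHook l * t ≤ 1 / 4 :=
    calc maxHook l * t = ℓ * maxHook l / (4 * l.card) := by ring
      _ ≤ l.card / (4 * l.card) := by gcongr
      _ = 1 / 4 := by field_simp
  have hexp : Real.exp (8 / 3 * l.card * t) ≤ 2 ^ ℓ :=
    calc Real.exp (8 / 3 * l.card * t) = Real.exp (2 / 3) ^ ℓ := by
          rw [← Real.exp_nat_mul]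
          congr 1
          linear_combination 8 / 3 * hnt
      _ ≤ 2 ^ ℓ := pow_le_pow_left₀ (Real.exp_nonneg _) exp_two_thirds_le_two ℓ
  rw [show 8 * (l.card : ℝ) / ℓ = 2 / t by field_simp; linear_combination 8 * hnt, div_pow,
    le_div_iff₀ (pow_pos ht ℓ)]
  exact (excitedSum_rowDiagram_mul_pow_le h2 ht.le hst).trans hexp

/-- bound on the excited sum of a short row. -/
theorem excited_sum_row_small (l : YoungDiagram) (ℓ : ℕ) (h1 : 1 ≤ ℓ) (h2 : ℓ ≤ l.rowLen 0)
    (h3 : (ℓ : ℝ) ≤ (l.card : ℝ) / (maxHook l : ℝ)) :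
    (excitedSum l (rowDiagram ℓ) : ℝ) ≤ (8 * (l.card : ℝ) / (ℓ : ℝ)) ^ ℓ :=
  excited_sum_row_small_general l ℓ h2 h3

end ThickHookPaper
end

section
/- Let λ be a Young diagram with n boxes and let j ≥ 1 be an integer. Then the number of ribbons ρ ⊆ λ with j boxes such that the set of boxes λ\ρ is again a Young diagram is at most 2δ(λ)·j. -/
open scoped BigOperators

namespace ThickHookPaper

section Aux

variable {l μ ν : YoungDiagram}

lemma rowLen_mono (h : μ ≤ l) (r : ℕ) : μ.rowLen r ≤ l.rowLen r := by
  by_contra hc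
  push_neg at hc
  have h1 : (r, l.rowLen r) ∈ μ := YoungDiagram.mem_iff_lt_rowLen.2 hc
  have h2 : (r, l.rowLen r) ∈ l := by
    have hsub := YoungDiagram.cells_subset_iff.2 h
    have := hsub (by simpa using h1)
    simpa using this
  simp [YoungDiagram.mem_iff_lt_rowLen] at h2

lemma mem_sdiff_iff (_ : μ ≤ l) {r c : ℕ} :
    (r, c) ∈ l.cells \ μ.cells ↔ μ.rowLen r ≤ c ∧ c < l.rowLen r := by
  simp only [Finset.mem_sdiff, YoungDiagram.mem_cells, YoungDiagram.mem_iff_lt_rowLen, not_lt]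
  exact and_comm

lemma crossing {R : Finset (ℕ × ℕ)} {u v : ℕ × ℕ}
    (h : Relation.ReflTransGen (fun x y => x ∈ R ∧ y ∈ R ∧ Adj x y) u v)
    {r : ℕ} (h1 : u.1 ≤ r) (h2 : r < v.1) :
    ∃ c, (r, c) ∈ R ∧ (r + 1, c) ∈ R := by
  induction h with
  | refl => omega
  | @tail b w hp hs ih =>
    obtain ⟨hbR, hwR, hadj⟩ := hs
    by_cases hb : r < b.1
    · exact ih hb
    · push_neg at hb
      rcases hadj with ⟨h', _⟩ | ⟨h', h'' | h''⟩
      · omega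
      · have hb1 : b.1 = r := by omega
        have hw1 : w.1 = r + 1 := by omega
        refine ⟨b.2, ?_, ?_⟩
        · have : (b.1, b.2) = b := rfl
          rw [← hb1, this]; exact hbR
        · have hww : (w.1, w.2) = w := rfl
          rw [← hw1, h', hww]; exact hwR
      · omega


/-- Bottom (largest) row index of the skew shape. -/
def botRow (l μ : YoungDiagram) : ℕ := (l.cells \ μ.cells).sup Prod.fst

/-- Top (smallest) nonempty row of the skew shape. -/
noncomputable def topRow (l μ : YoungDiagram) : ℕ :=
  sInf {r : ℕ | μ.rowLen r < l.rowLen r}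

lemma le_botRow {x : ℕ × ℕ} (hx : x ∈ l.cells \ μ.cells) : x.1 ≤ botRow l μ :=
  Finset.le_sup hx

lemma botRow_row (h : IsRibbon μ l) :
    μ.rowLen (botRow l μ) < l.rowLen (botRow l μ) := by
  obtain ⟨b, hb, hsup⟩ := Finset.exists_mem_eq_sup _ h.2.1 Prod.fst
  obtain ⟨b1, b2⟩ := b
  rw [mem_sdiff_iff h.1] at hb
  have : botRow l μ = b1 := hsup
  rw [this]
  omega

lemma topRow_row (h : IsRibbon μ l) :
    μ.rowLen (topRow l μ) < l.rowLen (topRow l μ) := by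
  have hne : {r : ℕ | μ.rowLen r < l.rowLen r}.Nonempty := ⟨botRow l μ, botRow_row h⟩
  exact Nat.sInf_mem hne

lemma topRow_le {r : ℕ} (hr : μ.rowLen r < l.rowLen r) : topRow l μ ≤ r :=
  Nat.sInf_le (show r ∈ {r : ℕ | μ.rowLen r < l.rowLen r} from hr)

lemma topRow_le_botRow (h : IsRibbon μ l) : topRow l μ ≤ botRow l μ :=
  topRow_le (botRow_row h)

lemma botRow_le {r : ℕ} (h : IsRibbon μ l) (hr : μ.rowLen r < l.rowLen r) :
    r ≤ botRow l μ := by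
  have : (r, μ.rowLen r) ∈ l.cells \ μ.cells := (mem_sdiff_iff h.1).2 ⟨le_rfl, hr⟩
  exact le_botRow this

lemma row_nonempty_of_between (h : IsRibbon μ l) {r : ℕ}
    (h1 : topRow l μ ≤ r) (h2 : r ≤ botRow l μ) :
    μ.rowLen r < l.rowLen r := by
  rcases eq_or_lt_of_le h2 with he | hlt
  · rw [he]; exact botRow_row h
  · have hu : (topRow l μ, μ.rowLen (topRow l μ)) ∈ l.cells \ μ.cells :=
      (mem_sdiff_iff h.1).2 ⟨le_rfl, topRow_row h⟩
    have hv : (botRow l μ, μ.rowLen (botRow l μ)) ∈ l.cells \ μ.cells :=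
      (mem_sdiff_iff h.1).2 ⟨le_rfl, botRow_row h⟩
    obtain ⟨c, hc, -⟩ := crossing (h.2.2.1 _ hu _ hv) h1 hlt
    rw [mem_sdiff_iff h.1] at hc
    omega

lemma step_eq (h : IsRibbon μ l) {r : ℕ}
    (hr : μ.rowLen r < l.rowLen r) (hr' : μ.rowLen (r + 1) < l.rowLen (r + 1)) :
    μ.rowLen r = l.rowLen (r + 1) - 1 := by
  have hu : (r, μ.rowLen r) ∈ l.cells \ μ.cells := (mem_sdiff_iff h.1).2 ⟨le_rfl, hr⟩
  have hv : (r + 1, μ.rowLen (r + 1)) ∈ l.cells \ μ.cells :=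
    (mem_sdiff_iff h.1).2 ⟨le_rfl, hr'⟩
  obtain ⟨c, hc, hc'⟩ := crossing (h.2.2.1 _ hu _ hv) (le_refl r) (Nat.lt_succ_self r)
  rw [mem_sdiff_iff h.1] at hc hc'
  have hlt : μ.rowLen r < l.rowLen (r + 1) := by omega
  by_contra hne
  have hlt2 : μ.rowLen r + 1 < l.rowLen (r + 1) := by omega
  have hmono := μ.rowLen_anti r (r + 1) (Nat.le_succ r)
  have hmonol := l.rowLen_anti r (r + 1) (Nat.le_succ r)
  exact h.2.2.2 r (μ.rowLen r)
    ⟨(mem_sdiff_iff h.1).2 ⟨le_rfl, hr⟩,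
     (mem_sdiff_iff h.1).2 ⟨hmono, hlt⟩,
     (mem_sdiff_iff h.1).2 ⟨Nat.le_succ _, by omega⟩,
     (mem_sdiff_iff h.1).2 ⟨by omega, hlt2⟩⟩

lemma rowLen_eq_of_lt_topRow (h : IsRibbon μ l) {r : ℕ} (hr : r < topRow l μ) :
    μ.rowLen r = l.rowLen r := by
  have := rowLen_mono h.1 r
  rcases eq_or_lt_of_le this with he | hlt
  · exact he
  · exact absurd (topRow_le hlt) (by omega)

lemma rowLen_eq_of_botRow_lt (h : IsRibbon μ l) {r : ℕ} (hr : botRow l μ < r) :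
    μ.rowLen r = l.rowLen r := by
  have := rowLen_mono h.1 r
  rcases eq_or_lt_of_le this with he | hlt
  · exact he
  · exact absurd (botRow_le h hlt) (by omega)

lemma card_sdiff_eq_sum (h : μ ≤ l) {N : ℕ}
    (hmax : ∀ x ∈ l.cells \ μ.cells, x.1 < N) :
    (l.cells \ μ.cells).card = ∑ r ∈ Finset.range N, (l.rowLen r - μ.rowLen r) := by
  rw [Finset.card_eq_sum_card_fiberwise (f := Prod.fst) (t := Finset.range N)
    (fun x hx => Finset.mem_range.2 (hmax x hx))]
  refine Finset.sum_congr rfl fun r _ => ?_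
  have himg : (l.cells \ μ.cells).filter (fun x => x.1 = r) =
      (Finset.Ico (μ.rowLen r) (l.rowLen r)).image (fun c => (r, c)) := by
    ext ⟨a, b⟩
    simp only [Finset.mem_filter, Finset.mem_image, Finset.mem_Ico, mem_sdiff_iff h,
      Prod.mk.injEq]
    constructor
    · rintro ⟨hab, rfl⟩
      exact ⟨b, hab, rfl, rfl⟩
    · rintro ⟨c, hc, rfl, rfl⟩
      exact ⟨hc, rfl⟩
  rw [himg, Finset.card_image_of_injective _ (fun a b hab => (Prod.mk.injEq _ _ _ _ ▸ hab).2),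
    Nat.card_Ico]


lemma card_lt_of_topRow_lt (hμ : IsRibbon μ l) (hν : IsRibbon ν l)
    (hb : botRow l ν = botRow l μ)
    (hm : ν.rowLen (botRow l μ) = μ.rowLen (botRow l μ))
    (ht : topRow l μ < topRow l ν) :
    (l.cells \ ν.cells).card < (l.cells \ μ.cells).card := by
  set r2 := botRow l μ with hr2
  have hμcard := card_sdiff_eq_sum hμ.1 (N := r2 + 1)
    (fun x hx => Nat.lt_succ_of_le (le_botRow hx))
  have hνcard := card_sdiff_eq_sum hν.1 (N := r2 + 1)
    (fun x hx => Nat.lt_succ_of_le (hb ▸ le_botRow hx))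
  rw [hμcard, hνcard]
  have htν2 : topRow l ν ≤ r2 := hb ▸ topRow_le_botRow hν
  have htμ2 : topRow l μ ≤ r2 := topRow_le_botRow hμ
  refine Finset.sum_lt_sum (fun r hr => ?_) ⟨topRow l μ, Finset.mem_range.2 (by omega), ?_⟩
  · rw [Finset.mem_range] at hr
    have hkey : μ.rowLen r ≤ ν.rowLen r := by
      by_cases hcase : r < topRow l ν
      · rw [rowLen_eq_of_lt_topRow hν hcase]; exact rowLen_mono hμ.1 r
      · push_neg at hcase
        have hrr2 : r ≤ r2 := by omega
        rcases eq_or_lt_of_le hrr2 with he | hlt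
        · rw [he]; exact le_of_eq hm.symm
        · have hμ1 : μ.rowLen r < l.rowLen r :=
            row_nonempty_of_between hμ (by omega) (by omega)
          have hμ2 : μ.rowLen (r + 1) < l.rowLen (r + 1) :=
            row_nonempty_of_between hμ (by omega) (by omega)
          have hν1 : ν.rowLen r < l.rowLen r :=
            row_nonempty_of_between hν hcase (by rw [hb]; omega)
          have hν2 : ν.rowLen (r + 1) < l.rowLen (r + 1) :=
            row_nonempty_of_between hν (by omega) (by rw [hb]; omega)
          rw [step_eq hμ hμ1 hμ2, step_eq hν hν1 hν2]
    omega
  · have h1 : μ.rowLen (topRow l μ) < l.rowLen (topRow l μ) := topRow_row hμ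
    have h2 : ν.rowLen (topRow l μ) = l.rowLen (topRow l μ) := rowLen_eq_of_lt_topRow hν ht
    omega

lemma ribbon_eq (hμ : IsRibbon μ l) (hν : IsRibbon ν l)
    (hb : botRow l ν = botRow l μ)
    (hm : ν.rowLen (botRow l μ) = μ.rowLen (botRow l μ))
    (hc : (l.cells \ μ.cells).card = (l.cells \ ν.cells).card) : μ = ν := by
  have hteq : topRow l μ = topRow l ν := by
    rcases lt_trichotomy (topRow l μ) (topRow l ν) with h | h | h
    · exact absurd (card_lt_of_topRow_lt hμ hν hb hm h) (by omega)
    · exact h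
    · exact absurd (card_lt_of_topRow_lt hν hμ hb.symm (by rw [hb]; exact hm.symm) h)
        (by omega)
  have hrow : ∀ r, μ.rowLen r = ν.rowLen r := by
    intro r
    by_cases h1 : r < topRow l μ
    · rw [rowLen_eq_of_lt_topRow hμ h1, rowLen_eq_of_lt_topRow hν (hteq ▸ h1)]
    by_cases h2 : botRow l μ < r
    · rw [rowLen_eq_of_botRow_lt hμ h2, rowLen_eq_of_botRow_lt hν (by rw [hb]; exact h2)]
    push_neg at h1 h2
    rcases eq_or_lt_of_le h2 with he | hlt
    · rw [he]; exact hm.symm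
    · have hμ1 : μ.rowLen r < l.rowLen r := row_nonempty_of_between hμ h1 h2
      have hμ2 : μ.rowLen (r + 1) < l.rowLen (r + 1) :=
        row_nonempty_of_between hμ (by omega) (by omega)
      have hν1 : ν.rowLen r < l.rowLen r :=
        row_nonempty_of_between hν (by rw [← hteq]; exact h1) (by rw [hb]; exact h2)
      have hν2 : ν.rowLen (r + 1) < l.rowLen (r + 1) :=
        row_nonempty_of_between hν (by rw [← hteq]; omega) (by rw [hb]; omega)
      rw [step_eq hμ hμ1 hμ2, step_eq hν hν1 hν2]
  ext ⟨a, b⟩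
  simp only [YoungDiagram.mem_cells, YoungDiagram.mem_iff_lt_rowLen, hrow a]

end Aux

section Corners

variable {l : YoungDiagram}

lemma corner_mem_row {i c : ℕ} (h : (i, c) ∈ corners l) : c + 1 = l.rowLen i := by
  simp only [corners, Finset.mem_filter, YoungDiagram.mem_cells] at h
  obtain ⟨h1, h2, h3⟩ := h
  rw [YoungDiagram.mem_iff_lt_rowLen] at h1
  rw [YoungDiagram.mem_iff_lt_rowLen] at h2
  omega

lemma corner_col_eq {i c1 c2 : ℕ} (h1 : (i, c1) ∈ corners l) (h2 : (i, c2) ∈ corners l) :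
    c1 = c2 := by
  have := corner_mem_row h1
  have := corner_mem_row h2
  omega

lemma corner_row_eq_aux {i1 i2 c : ℕ} (h1 : (i1, c) ∈ corners l) (h2 : (i2, c) ∈ corners l)
    (hlt : i1 < i2) : False := by
  simp only [corners, Finset.mem_filter, YoungDiagram.mem_cells] at h1 h2
  exact h1.2.2 (l.up_left_mem hlt le_rfl h2.1)

lemma corner_row_eq {i1 i2 c : ℕ} (h1 : (i1, c) ∈ corners l) (h2 : (i2, c) ∈ corners l) :
    i1 = i2 := by
  rcases lt_trichotomy i1 i2 with h | h | h
  · exact absurd (corner_row_eq_aux h1 h2 h) (fun x => x)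
  · exact h
  · exact absurd (corner_row_eq_aux h2 h1 h) (fun x => x)

lemma lt_diagLen {k : ℕ} (h : (k, k) ∈ l) : k < diagLen l := by
  have hsub : (Finset.range (k + 1)).image (fun i => (i, i)) ⊆
      l.cells.filter (fun u => u.1 = u.2) := by
    intro x hx
    simp only [Finset.mem_image, Finset.mem_range] at hx
    obtain ⟨i, hi, rfl⟩ := hx
    refine Finset.mem_filter.2 ⟨?_, rfl⟩
    simpa using l.up_left_mem (by omega : i ≤ k) (by omega : i ≤ k) h
  have hc := Finset.card_le_card hsub
  rwa [Finset.card_image_of_injective _ (fun a b hab => (Prod.mk.injEq _ _ _ _ ▸ hab).1),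
    Finset.card_range] at hc

lemma corners_card_le : (corners l).card ≤ 2 * diagLen l := by
  classical
  have hsub : corners l ⊆ (corners l).filter (fun u => u.1 < diagLen l) ∪
      (corners l).filter (fun u => u.2 < diagLen l) := by
    intro u hu
    rcases lt_or_ge u.1 (diagLen l) with h | h
    · exact Finset.mem_union_left _ (Finset.mem_filter.2 ⟨hu, h⟩)
    · refine Finset.mem_union_right _ (Finset.mem_filter.2 ⟨hu, ?_⟩)
      by_contra hc
      push_neg at hc
      have hul : (u.1, u.2) ∈ l := by
        have := (Finset.mem_filter.1 hu).1
        simpa using this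
      have hd : (diagLen l, diagLen l) ∈ l := l.up_left_mem h hc hul
      exact absurd (lt_diagLen hd) (lt_irrefl _)
  have h1 : ((corners l).filter (fun u => u.1 < diagLen l)).card ≤ diagLen l := by
    have hcard := Finset.card_le_card_of_injOn (s := (corners l).filter (fun u => u.1 < diagLen l))
      (f := Prod.fst) (t := Finset.range (diagLen l))
      (fun u hu => Finset.mem_range.2 (Finset.mem_filter.1 hu).2) ?_
    · simpa using hcard
    · rintro ⟨a1, a2⟩ ha ⟨b1, b2⟩ hb hab
      simp only [Finset.coe_filter, Set.mem_setOf_eq] at ha hb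
      obtain rfl : a1 = b1 := hab
      exact congrArg (Prod.mk a1) (corner_col_eq ha.1 hb.1)
  have h2 : ((corners l).filter (fun u => u.2 < diagLen l)).card ≤ diagLen l := by
    have hcard := Finset.card_le_card_of_injOn (s := (corners l).filter (fun u => u.2 < diagLen l))
      (f := Prod.snd) (t := Finset.range (diagLen l))
      (fun u hu => Finset.mem_range.2 (Finset.mem_filter.1 hu).2) ?_
    · simpa using hcard
    · rintro ⟨a1, a2⟩ ha ⟨b1, b2⟩ hb hab
      simp only [Finset.coe_filter, Set.mem_setOf_eq] at ha hb
      obtain rfl : a2 = b2 := hab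
      have := corner_row_eq ha.1 hb.1
      exact congrArg (fun i => (i, a2)) this
  calc (corners l).card ≤ _ := Finset.card_le_card hsub
    _ ≤ _ := Finset.card_union_le _ _
    _ ≤ 2 * diagLen l := by omega

end Corners

/-- there are at most `2δ(λ)·j` ways to peel a ribbon of size `j` from `λ`. -/
theorem count_peelable_ribbons (l : YoungDiagram) (j : ℕ) (hj : 1 ≤ j) :
    Nat.card {μ : YoungDiagram // IsRibbon μ l ∧ (l.cells \ μ.cells).card = j} ≤
      2 * diagLen l * j := by
  classical
  set T : Finset (ℕ × ℕ) := ((corners l).image Prod.fst) ×ˢ Finset.range j with hT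
  have hcorner : ∀ (μ : YoungDiagram), IsRibbon μ l →
      (botRow l μ, l.rowLen (botRow l μ) - 1) ∈ corners l := by
    intro μ h
    have hrow := botRow_row h
    simp only [corners, Finset.mem_filter, YoungDiagram.mem_cells]
    refine ⟨?_, ?_, ?_⟩
    · rw [YoungDiagram.mem_iff_lt_rowLen]; omega
    · rw [YoungDiagram.mem_iff_lt_rowLen]; omega
    · intro hmem
      by_cases hin : (botRow l μ + 1, l.rowLen (botRow l μ) - 1) ∈ μ
      · have hup := μ.up_left_mem (Nat.le_succ (botRow l μ)) le_rfl hin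
        rw [YoungDiagram.mem_iff_lt_rowLen] at hup
        omega
      · have hR : (botRow l μ + 1, l.rowLen (botRow l μ) - 1) ∈ l.cells \ μ.cells := by
          simp [Finset.mem_sdiff, YoungDiagram.mem_cells, hmem, hin]
        have hle := le_botRow hR
        simp only at hle
        omega
  have hset : ∀ (x : {μ : YoungDiagram // IsRibbon μ l ∧ (l.cells \ μ.cells).card = j}),
      (botRow l x.1, l.rowLen (botRow l x.1) - 1 - x.1.rowLen (botRow l x.1)) ∈ T := by
    rintro ⟨μ, hμ, hcard⟩
    simp only [hT, Finset.mem_product, Finset.mem_image, Finset.mem_range]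
    refine ⟨⟨_, hcorner μ hμ, rfl⟩, ?_⟩
    have hrow := botRow_row hμ
    have hle : l.rowLen (botRow l μ) - μ.rowLen (botRow l μ) ≤ j := by
      have hsum := card_sdiff_eq_sum hμ.1 (N := botRow l μ + 1)
        (fun x hx => Nat.lt_succ_of_le (le_botRow hx))
      rw [hcard] at hsum
      rw [hsum]
      exact Finset.single_le_sum (f := fun r => l.rowLen r - μ.rowLen r)
        (fun i _ => Nat.zero_le _) (Finset.mem_range.2 (Nat.lt_succ_self _))
    omega
  have hinj : Function.Injective
      (fun x : {μ : YoungDiagram // IsRibbon μ l ∧ (l.cells \ μ.cells).card = j} =>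
        (⟨_, hset x⟩ : ↥T)) := by
    rintro ⟨μ, hμ, hcμ⟩ ⟨ν, hν, hcν⟩ hxy
    have h' : (botRow l μ, l.rowLen (botRow l μ) - 1 - μ.rowLen (botRow l μ)) =
        (botRow l ν, l.rowLen (botRow l ν) - 1 - ν.rowLen (botRow l ν)) :=
      congrArg Subtype.val hxy
    rw [Prod.mk.injEq] at h'
    obtain ⟨hb, ht⟩ := h'
    have hrowμ := botRow_row hμ
    have hrowν := botRow_row hν
    rw [← hb] at ht hrowν
    have hm : ν.rowLen (botRow l μ) = μ.rowLen (botRow l μ) := by omega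
    exact Subtype.ext (ribbon_eq hμ hν hb.symm hm (hcμ.trans hcν.symm))
  calc Nat.card {μ : YoungDiagram // IsRibbon μ l ∧ (l.cells \ μ.cells).card = j}
      ≤ Nat.card T := Nat.card_le_card_of_injective _ hinj
    _ = T.card := Nat.card_eq_finsetCard T
    _ = ((corners l).image Prod.fst).card * j := by
        rw [hT, Finset.card_product, Finset.card_range]
    _ ≤ (corners l).card * j := Nat.mul_le_mul_right _ Finset.card_image_le
    _ ≤ 2 * diagLen l * j := Nat.mul_le_mul_right _ corners_card_le

end ThickHookPaper
end
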